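/- arXiv:alg-geom/9602017 — 4 statements merged into one kernel-verified Lean document; each statement's English description precedes it below -/
import Mathlib

section
/- Let A be a discrete valuation ring containing a field of characteristic ≠ 2, complete with respect to its maximal ideal, with fraction field K and residue field k. Let a be a unit of A whose image in k is not a square in k, and let b be a uniformizer of A (an irreducible element). Then the quaternion algebra (a,b)_K is a division ring (equivalently, its class in the Brauer group of K is nontrivial). -/
open Polynomial Quaternion

section Aux

variable {A : Type*} [CommRing A] [IsDomain A] [IsDiscreteValuationRing A]

/-- Step lemma: if `α² - a β² = b * c` with `a` a unit of nonsquare residue and `b`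
irreducible, then `b ∣ α` and `b ∣ β`. -/
lemma quat_step (a b : A)
    (ha' : ¬ ∃ e : IsLocalRing.ResidueField A, IsLocalRing.residue A a = e ^ 2)
    (hb : Irreducible b) {α β c : A} (h : α ^ 2 - a * β ^ 2 = b * c) :
    b ∣ α ∧ b ∣ β := by
  have hbmem : (IsLocalRing.residue A) b = 0 := by
    rw [IsLocalRing.residue_eq_zero_iff,
      (IsDiscreteValuationRing.irreducible_iff_uniformizer b).mp hb, Ideal.mem_span_singleton]
  have h0 : (IsLocalRing.residue A) α ^ 2 =
      (IsLocalRing.residue A) a * (IsLocalRing.residue A) β ^ 2 := by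
    have := congrArg (IsLocalRing.residue A) h
    simp only [map_sub, map_mul, map_pow, hbmem, zero_mul] at this
    linear_combination this
  have hβ : (IsLocalRing.residue A) β = 0 := by
    by_contra hβ
    exact ha' ⟨(IsLocalRing.residue A) α / (IsLocalRing.residue A) β, by
      field_simp [h0]
      exact h0.symm⟩
  have hα : (IsLocalRing.residue A) α = 0 := by
    have := h0
    rw [hβ] at this
    simpa [pow_eq_zero_iff] using this
  constructor <;> rw [← Ideal.mem_span_singleton,
    ← (IsDiscreteValuationRing.irreducible_iff_uniformizer b).mp hb,
    ← IsLocalRing.residue_eq_zero_iff] <;> assumption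

lemma quat_descent (a b : A)
    (ha' : ¬ ∃ e : IsLocalRing.ResidueField A, IsLocalRing.residue A a = e ^ 2)
    (hb : Irreducible b) :
    ∀ (n : ℕ) (α β γ δ : A), α ^ 2 - a * β ^ 2 = b * (γ ^ 2 - a * δ ^ 2) →
      b ^ n ∣ α ∧ b ^ n ∣ β ∧ b ^ n ∣ γ ∧ b ^ n ∣ δ := by
  intro n
  induction n with
  | zero => intro α β γ δ _; simp
  | succ n ih =>
    intro α β γ δ h
    obtain ⟨⟨α', rfl⟩, ⟨β', rfl⟩⟩ := quat_step a b ha' hb h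
    have h2 : γ ^ 2 - a * δ ^ 2 = b * (α' ^ 2 - a * β' ^ 2) := by
      apply mul_left_cancel₀ hb.ne_zero
      linear_combination -h
    obtain ⟨hγ, hδ, hα', hβ'⟩ := ih γ δ α' β' h2
    obtain ⟨⟨γ', rfl⟩, ⟨δ', rfl⟩⟩ := quat_step a b ha' hb h2
    have h3 : α' ^ 2 - a * β' ^ 2 = b * (γ' ^ 2 - a * δ' ^ 2) := by
      apply mul_left_cancel₀ hb.ne_zero
      linear_combination -h2
    obtain ⟨_, _, hγ', hδ'⟩ := ih α' β' γ' δ' h3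
    have key : ∀ {x : A}, b ^ n ∣ x → b ^ (n + 1) ∣ b * x := fun hx => by
      rw [pow_succ']; exact mul_dvd_mul_left b hx
    exact ⟨key hα', key hβ', key hγ', key hδ'⟩

lemma quat_zero_of_forall_pow_dvd {b : A} (hb : Irreducible b) {x : A}
    (h : ∀ n : ℕ, b ^ n ∣ x) : x = 0 := by
  rw [← IsDiscreteValuationRing.addVal_eq_top_iff]
  by_contra htop
  obtain ⟨m, hm⟩ := WithTop.ne_top_iff_exists.mp htop
  have hle : ∀ n : ℕ, (n : ℕ∞) ≤ IsDiscreteValuationRing.addVal A x := fun n => by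
    have := IsDiscreteValuationRing.addVal_le_iff_dvd.mpr (h n)
    rwa [hb.addVal_pow] at this
  have := hle (m + 1)
  rw [← hm] at this
  have h2 : (m : ℕ∞) + 1 ≤ (m : ℕ∞) := by
    rw [← Nat.cast_one, ← Nat.cast_add]; exact this
  exact absurd ((ENat.add_one_le_iff (ENat.coe_ne_top m)).mp h2) (lt_irrefl _)

lemma quat_aniso (a b : A)
    (ha' : ¬ ∃ e : IsLocalRing.ResidueField A, IsLocalRing.residue A a = e ^ 2)
    (hb : Irreducible b) {α β γ δ : A}
    (h : α ^ 2 - a * β ^ 2 = b * (γ ^ 2 - a * δ ^ 2)) :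
    α = 0 ∧ β = 0 ∧ γ = 0 ∧ δ = 0 := by
  refine ⟨?_, ?_, ?_, ?_⟩ <;>
    exact quat_zero_of_forall_pow_dvd hb fun n => by
      have := quat_descent a b ha' hb n α β γ δ h
      tauto

end Aux

/-- Let `A` be a complete discrete valuation ring containing a field `F` of
characteristic ≠ 2, with fraction field `K` and residue field `k`. If `a` is a unit of `A`
whose residue is not a square in `k`, and `b` is a uniformizer (irreducible element) of `A`,
then the quaternion algebra `(a,b)_K` is a division ring, i.e. every nonzero element is
invertible. -/
theorem quaternionAlgebra_isUnit_of_nonsquare_residue_of_irreducible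
    (F A K : Type*) [Field F] [CommRing A] [IsDomain A] [IsDiscreteValuationRing A]
    [Algebra F A] (hF : (2 : F) ≠ 0)
    [IsAdicComplete (IsLocalRing.maximalIdeal A) A]
    [Field K] [Algebra A K] [IsFractionRing A K]
    (a b : A) (ha : IsUnit a)
    (ha' : ¬ ∃ e : IsLocalRing.ResidueField A, IsLocalRing.residue A a = e ^ 2)
    (hb : Irreducible b) :
    ∀ x : ℍ[K, algebraMap A K a, algebraMap A K b], x ≠ 0 → IsUnit x := by
  intro x hx
  have hf : True := trivial
  set N : K := x.re ^ 2 - algebraMap A K a * x.imI ^ 2 - algebraMap A K b * x.imJ ^ 2 +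
    algebraMap A K a * algebraMap A K b * x.imK ^ 2 with hNdef
  have hstar : x * star x = (N : ℍ[K, algebraMap A K a, algebraMap A K b]) := by
    rw [QuaternionAlgebra.mul_star_eq_coe]
    congr 1
    simp only [QuaternionAlgebra.re_mul, QuaternionAlgebra.re_star, QuaternionAlgebra.imI_star,
      QuaternionAlgebra.imJ_star, QuaternionAlgebra.imK_star, hNdef]
    ring
  by_cases hN : N = 0
  · exfalso
    obtain ⟨d, hd⟩ := IsLocalization.exist_integer_multiples (nonZeroDivisors A)
      (Finset.univ : Finset (Fin 4)) ![x.re, x.imI, x.imJ, x.imK]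
    obtain ⟨α, hα⟩ := hd 0 (Finset.mem_univ _)
    obtain ⟨β, hβ⟩ := hd 1 (Finset.mem_univ _)
    obtain ⟨γ, hγ⟩ := hd 2 (Finset.mem_univ _)
    obtain ⟨δ, hδ⟩ := hd 3 (Finset.mem_univ _)
    simp only [Matrix.cons_val_zero, Matrix.cons_val_one, Matrix.head_cons, Matrix.cons_val_two,
      Matrix.tail_cons, Matrix.cons_val_three, Submonoid.smul_def, Algebra.smul_def] at hα hβ hγ hδ
    have hd0 : algebraMap A K (d : A) ≠ 0 := by
      have := (IsFractionRing.injective A K).ne_iff.mpr (nonZeroDivisors.coe_ne_zero d)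
      simpa using this
    have hA : α ^ 2 - a * β ^ 2 = b * (γ ^ 2 - a * δ ^ 2) := by
      apply IsFractionRing.injective A K
      simp only [map_sub, map_mul, map_pow, hα, hβ, hγ, hδ]
      linear_combination (algebraMap A K (d : A)) ^ 2 * hN
    obtain ⟨rfl, rfl, rfl, rfl⟩ := quat_aniso a b ha' hb hA
    simp only [map_zero] at hα hβ hγ hδ
    apply hx
    ext <;> simp only [QuaternionAlgebra.re_zero, QuaternionAlgebra.imI_zero,
      QuaternionAlgebra.imJ_zero, QuaternionAlgebra.imK_zero]
    · exact ((mul_eq_zero.mp hα.symm).resolve_left hd0)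
    · exact ((mul_eq_zero.mp hβ.symm).resolve_left hd0)
    · exact ((mul_eq_zero.mp hγ.symm).resolve_left hd0)
    · exact ((mul_eq_zero.mp hδ.symm).resolve_left hd0)
  · have h1 : x * (N⁻¹ • star x) = 1 := by
      rw [mul_smul_comm, hstar, QuaternionAlgebra.smul_coe, inv_mul_cancel₀ hN,
        QuaternionAlgebra.coe_one]
    have h2 : (N⁻¹ • star x) * x = 1 := by
      rw [smul_mul_assoc, star_comm_self', hstar, QuaternionAlgebra.smul_coe,
        inv_mul_cancel₀ hN, QuaternionAlgebra.coe_one]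
    exact ⟨⟨x, N⁻¹ • star x, h1, h2⟩, rfl⟩
end

section
/- Let A be a discrete valuation ring containing a field of characteristic ≠ 2, complete with respect to its maximal ideal, with fraction field K and residue field k. Let a be a unit of A whose image in k is not a square in k, let π be a uniformizer of A, and let b = u·π^(2n+1) for some unit u of A and some n ≥ 0 (i.e., b has odd valuation). Then the quaternion algebra (a,b)_K is a division ring (equivalently, its class in the Brauer group of K is nontrivial). -/
open Polynomial Quaternion

section aux

variable {A : Type*} [CommRing A] [IsDomain A] [IsDiscreteValuationRing A]

lemma aux_unit_norm (a : A)
    (ha' : ¬ ∃ e : IsLocalRing.ResidueField A, IsLocalRing.residue A a = e ^ 2)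
    {π : A} (hπ : Irreducible π) (w x : A) (h : ¬ (π ∣ w ∧ π ∣ x)) :
    IsUnit (w ^ 2 - a * x ^ 2) := by
  rw [← IsLocalRing.residue_ne_zero_iff_isUnit]
  intro h0
  have hd : ∀ y : A, π ∣ y ↔ IsLocalRing.residue A y = 0 := by
    intro y
    rw [IsLocalRing.residue_eq_zero_iff, hπ.maximalIdeal_eq, Ideal.mem_span_singleton]
  set φ := IsLocalRing.residue A
  have h0' : φ w ^ 2 = φ a * φ x ^ 2 := by
    rw [map_sub, map_mul, map_pow, map_pow, sub_eq_zero] at h0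
    exact h0
  by_cases hx : φ x = 0
  · have hw : φ w = 0 := by
      have : φ w ^ 2 = 0 := by rw [h0', hx]; ring
      exact pow_eq_zero_iff (n := 2) (by norm_num) |>.mp this
    exact h ⟨(hd w).mpr hw, (hd x).mpr hx⟩
  · exact ha' ⟨φ w / φ x, by field_simp [h0']; exact h0'.symm⟩

lemma aux_primitive {π : A} (hπ : Irreducible π) (p r : A) (h : ¬ (p = 0 ∧ r = 0)) :
    ∃ (m : ℕ) (p' r' : A), p = π ^ m * p' ∧ r = π ^ m * r' ∧ ¬ (π ∣ p' ∧ π ∣ r') := by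
  by_cases hp : p = 0
  · have hr : r ≠ 0 := fun hr => h ⟨hp, hr⟩
    obtain ⟨m, v, rfl⟩ := IsDiscreteValuationRing.eq_unit_mul_pow_irreducible hr hπ
    exact ⟨m, 0, v, by rw [hp, mul_zero], mul_comm _ _, fun hh =>
      hπ.not_isUnit (isUnit_of_dvd_unit hh.2 v.isUnit)⟩
  by_cases hr : r = 0
  · obtain ⟨m, v, rfl⟩ := IsDiscreteValuationRing.eq_unit_mul_pow_irreducible hp hπ
    exact ⟨m, v, 0, mul_comm _ _, by rw [hr, mul_zero], fun hh =>
      hπ.not_isUnit (isUnit_of_dvd_unit hh.1 v.isUnit)⟩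
  obtain ⟨m₁, v₁, rfl⟩ := IsDiscreteValuationRing.eq_unit_mul_pow_irreducible hp hπ
  obtain ⟨m₂, v₂, rfl⟩ := IsDiscreteValuationRing.eq_unit_mul_pow_irreducible hr hπ
  refine ⟨min m₁ m₂, v₁ * π ^ (m₁ - min m₁ m₂), v₂ * π ^ (m₂ - min m₁ m₂), by
      rw [mul_left_comm, ← pow_add]; congr 2; omega, by
      rw [mul_left_comm, ← pow_add]; congr 2; omega, ?_⟩
  rintro ⟨h1, h2⟩
  rcases min_cases m₁ m₂ with ⟨hm, _⟩ | ⟨hm, _⟩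
  · rw [hm, Nat.sub_self, pow_zero, mul_one] at h1
    exact hπ.not_isUnit (isUnit_of_dvd_unit h1 v₁.isUnit)
  · rw [hm, Nat.sub_self, pow_zero, mul_one] at h2
    exact hπ.not_isUnit (isUnit_of_dvd_unit h2 v₂.isUnit)

variable {K : Type*} [Field K] [Algebra A K] [IsFractionRing A K]

/-- Every nonzero element of K is φ p / φ q with p q nonzero. -/
lemma aux_ratio (c : K) (hc : c ≠ 0) :
    ∃ p q : A, p ≠ 0 ∧ q ≠ 0 ∧ c * algebraMap A K q = algebraMap A K p := by
  obtain ⟨p, q, hq, hc'⟩ := IsFractionRing.div_surjective (A := A) c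
  have hq0 : q ≠ 0 := nonZeroDivisors.ne_zero hq
  have hqK : algebraMap A K q ≠ 0 := by
    simpa using (map_ne_zero_iff _ (IsFractionRing.injective A K)).mpr hq0
  refine ⟨p, q, ?_, hq0, by rw [← hc', div_mul_cancel₀ _ hqK]⟩
  rintro rfl
  rw [← hc'] at hc
  simp at hc

lemma aux_even_val (a : A)
    (ha' : ¬ ∃ e : IsLocalRing.ResidueField A, IsLocalRing.residue A a = e ^ 2)
    {π : A} (hπ : Irreducible π) (w x : K) (h : ¬ (w = 0 ∧ x = 0)) :
    ∃ (c : K) (ε : A), c ≠ 0 ∧ IsUnit ε ∧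
      w ^ 2 - algebraMap A K a * x ^ 2 = c ^ 2 * algebraMap A K ε := by
  set φ := algebraMap A K
  have hinj := IsFractionRing.injective A K
  obtain ⟨p₁, q₁, hq₁, hw⟩ := IsFractionRing.div_surjective (A := A) w
  obtain ⟨p₂, q₂, hq₂, hx⟩ := IsFractionRing.div_surjective (A := A) x
  have hq₁0 : φ q₁ ≠ 0 := (map_ne_zero_iff _ hinj).mpr (nonZeroDivisors.ne_zero hq₁)
  have hq₂0 : φ q₂ ≠ 0 := (map_ne_zero_iff _ hinj).mpr (nonZeroDivisors.ne_zero hq₂)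
  -- common numerators
  have hnz : ¬ (p₁ * q₂ = 0 ∧ p₂ * q₁ = 0) := by
    rintro ⟨h1, h2⟩
    apply h
    constructor
    · rw [← hw]; rcases mul_eq_zero.mp h1 with h' | h'
      · rw [h']; simp
      · exact absurd h' (nonZeroDivisors.ne_zero hq₂)
    · rw [← hx]; rcases mul_eq_zero.mp h2 with h' | h'
      · rw [h']; simp
      · exact absurd h' (nonZeroDivisors.ne_zero hq₁)
  obtain ⟨m, p', r', hp', hr', hprim⟩ := aux_primitive hπ _ _ hnz
  have hε := aux_unit_norm a ha' hπ p' r' hprim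
  refine ⟨φ π ^ m / (φ q₁ * φ q₂), p' ^ 2 - a * r' ^ 2, ?_, hε, ?_⟩
  · apply div_ne_zero
    · exact pow_ne_zero _ ((map_ne_zero_iff _ hinj).mpr hπ.ne_zero)
    · exact mul_ne_zero hq₁0 hq₂0
  · have hw' : w = φ (π ^ m * p') / (φ q₁ * φ q₂) := by
      rw [← hp', map_mul, ← hw]
      rw [div_eq_div_iff hq₁0 (mul_ne_zero hq₁0 hq₂0)]
      ring
    have hx' : x = φ (π ^ m * r') / (φ q₁ * φ q₂) := by
      rw [← hr', map_mul, ← hx]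
      rw [div_eq_div_iff hq₂0 (mul_ne_zero hq₁0 hq₂0)]
      ring
    rw [hw', hx']
    push_cast [map_sub, map_mul, map_pow]
    field_simp

end aux

lemma aux_parity {A : Type*} [CommRing A] [IsDomain A] [IsDiscreteValuationRing A]
    {π : A} (hπ : Irreducible π) {ε δ : A} (hε : IsUnit ε) (hδ : IsUnit δ)
    {m k : ℕ} (h : ε * π ^ m = δ * π ^ k) : m = k :=
  IsDiscreteValuationRing.unit_mul_pow_congr_pow hπ hπ hε.unit hδ.unit m k
    (by rw [hε.unit_spec, hδ.unit_spec]; exact h)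

/-- Let `A` be a complete discrete valuation ring containing a field of
characteristic ≠ 2, with fraction field `K` and residue field `k`. If `a` is a unit of `A`
whose residue is not a square in `k`, and `b = u * π ^ (2n+1)` where `u` is a unit of `A`
and `π` a uniformizer (so `b` has odd valuation), then the quaternion algebra `(a,b)_K`
is a division ring, i.e. every nonzero element is invertible. -/
theorem quaternionAlgebra_isUnit_of_nonsquare_residue_of_odd_valuation
    (F A K : Type*) [Field F] [CommRing A] [IsDomain A] [IsDiscreteValuationRing A]
    [Algebra F A] (hF : (2 : F) ≠ 0)
    [IsAdicComplete (IsLocalRing.maximalIdeal A) A]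
    [Field K] [Algebra A K] [IsFractionRing A K]
    (a : A) (ha : IsUnit a)
    (ha' : ¬ ∃ e : IsLocalRing.ResidueField A, IsLocalRing.residue A a = e ^ 2)
    (π u : A) (hπ : Irreducible π) (hu : IsUnit u) (n : ℕ)
    (b : A) (hb : b = u * π ^ (2 * n + 1)) :
    ∀ x : ℍ[K, algebraMap A K a, algebraMap A K b], x ≠ 0 → IsUnit x := by
  intro X hX
  have hinj : Function.Injective (algebraMap A K) := IsFractionRing.injective A K
  have hb0 : b ≠ 0 := hb ▸ mul_ne_zero hu.ne_zero (pow_ne_zero _ hπ.ne_zero)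
  have hbK : algebraMap A K b ≠ 0 := (map_ne_zero_iff _ hinj).mpr hb0
  set N : K := X.re ^ 2 - algebraMap A K a * X.imI ^ 2 -
    algebraMap A K b * (X.imJ ^ 2 - algebraMap A K a * X.imK ^ 2) with hN
  have hmul : X * star X = (N : ℍ[K, algebraMap A K a, algebraMap A K b]) := by
    rw [QuaternionAlgebra.mul_star_eq_coe]
    congr 1
    simp only [QuaternionAlgebra.re_mul, QuaternionAlgebra.re_star, QuaternionAlgebra.imI_star,
      QuaternionAlgebra.imJ_star, QuaternionAlgebra.imK_star, hN]
    ring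
  have hN0 : N ≠ 0 := by
    intro h0
    by_cases hJK : X.imJ = 0 ∧ X.imK = 0
    · have hRI : ¬ (X.re = 0 ∧ X.imI = 0) := by
        rintro ⟨h1, h2⟩
        exact hX (by ext <;> simp [h1, h2, hJK.1, hJK.2])
      obtain ⟨c, ε, hc, hε, hcε⟩ := aux_even_val (K := K) a ha' hπ X.re X.imI hRI
      have : c ^ 2 * algebraMap A K ε = 0 := by
        rw [← hcε]; rw [hN, hJK.1, hJK.2] at h0; linear_combination h0
      rcases mul_eq_zero.mp this with h' | h'
      · exact hc (pow_eq_zero_iff (n := 2) (by norm_num) |>.mp h')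
      · exact hε.ne_zero (hinj (by simpa using h'))
    · obtain ⟨d, δ, hd, hδ, hdδ⟩ := aux_even_val (K := K) a ha' hπ X.imJ X.imK hJK
      have hδ0 : algebraMap A K δ ≠ 0 := fun h' => hδ.ne_zero (hinj (by simpa using h'))
      have hRHS : algebraMap A K b * (d ^ 2 * algebraMap A K δ) ≠ 0 :=
        mul_ne_zero hbK (mul_ne_zero (pow_ne_zero _ hd) hδ0)
      have hRI : ¬ (X.re = 0 ∧ X.imI = 0) := by
        rintro ⟨h1, h2⟩
        apply hRHS
        rw [← hdδ]
        rw [hN, h1, h2] at h0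
        linear_combination -h0
      obtain ⟨c, ε, hc, hε, hcε⟩ := aux_even_val (K := K) a ha' hπ X.re X.imI hRI
      have hkey : c ^ 2 * algebraMap A K ε =
          algebraMap A K b * (d ^ 2 * algebraMap A K δ) := by
        rw [← hcε, ← hdδ]; rw [hN] at h0; linear_combination h0
      obtain ⟨p, q, hp, hq, hcq⟩ := aux_ratio (A := A) (K := K) c hc
      obtain ⟨s, t, hs, ht, hdt⟩ := aux_ratio (A := A) (K := K) d hd
      have key : p ^ 2 * t ^ 2 * ε = b * s ^ 2 * q ^ 2 * δ := by
        apply hinj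
        push_cast [map_mul, map_pow]
        rw [← hcq, ← hdt]
        linear_combination ((algebraMap A K q) ^ 2 * (algebraMap A K t) ^ 2) * hkey
      obtain ⟨m₁, v₁, rfl⟩ := IsDiscreteValuationRing.eq_unit_mul_pow_irreducible hp hπ
      obtain ⟨m₂, v₂, rfl⟩ := IsDiscreteValuationRing.eq_unit_mul_pow_irreducible ht hπ
      obtain ⟨m₃, v₃, rfl⟩ := IsDiscreteValuationRing.eq_unit_mul_pow_irreducible hs hπ
      obtain ⟨m₄, v₄, rfl⟩ := IsDiscreteValuationRing.eq_unit_mul_pow_irreducible hq hπ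
      rw [hb] at key
      have heq : ((v₁ : A) ^ 2 * (v₂ : A) ^ 2 * ε) * π ^ (2 * m₁ + 2 * m₂) =
          (u * (v₃ : A) ^ 2 * (v₄ : A) ^ 2 * δ) * π ^ (2 * n + 1 + 2 * m₃ + 2 * m₄) := by
        rw [pow_add, pow_add, pow_add, pow_add, pow_mul, pow_mul, pow_mul, pow_mul]
        linear_combination key
      have := aux_parity hπ
        (((v₁.isUnit.pow 2).mul (v₂.isUnit.pow 2)).mul hε)
        (((hu.mul (v₃.isUnit.pow 2)).mul (v₄.isUnit.pow 2)).mul hδ) heq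
      omega
  rw [isUnit_iff_exists]
  refine ⟨star X * ((N⁻¹ : K) : ℍ[K, algebraMap A K a, algebraMap A K b]), ?_, ?_⟩
  · rw [← mul_assoc, hmul, ← QuaternionAlgebra.coe_mul, mul_inv_cancel₀ hN0,
      QuaternionAlgebra.coe_one]
  · rw [mul_assoc, QuaternionAlgebra.coe_commutes, ← mul_assoc,
      QuaternionAlgebra.star_mul_eq_coe]
    have : ((star X * X).re : ℍ[K, algebraMap A K a, algebraMap A K b]) =
        (N : ℍ[K, algebraMap A K a, algebraMap A K b]) := by
      congr 1
      simp only [QuaternionAlgebra.re_mul, QuaternionAlgebra.re_star, QuaternionAlgebra.imI_star,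
        QuaternionAlgebra.imJ_star, QuaternionAlgebra.imK_star, hN]
      ring
    rw [this, ← QuaternionAlgebra.coe_mul, mul_inv_cancel₀ hN0, QuaternionAlgebra.coe_one]
end

section
/- Let K be a field of characteristic ≠ 2 and let L/K be a Galois field extension of degree 2 with Galois group generated by σ. Let b, e ∈ K be nonzero, let h be the 2×2 matrix with rows (0, b) and (1, 0), and suppose there exist g ∈ GL₂(L) with g·σ(g) = e·I, M ∈ GL₂(L), and a nonzero c ∈ L such that h = c · (M · g · σ(M)⁻¹). Then b/e = c·σ(c); that is, b/e is the norm Norm_{L/K}(c). -/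
open Matrix

private lemma map_mul_aux {K L : Type*} [Field K] [Field L] [Algebra K L]
    (σ : L ≃ₐ[K] L) (A B : Matrix (Fin 2) (Fin 2) L) :
    (A * B).map σ = A.map σ * B.map σ := by
  ext i j
  simp [Matrix.map_apply, Matrix.mul_apply, map_sum, _root_.map_mul]

/-- Let `L/K` be a Galois extension of degree 2 of fields of
characteristic ≠ 2, with Galois group generated by `σ` (i.e. `σ ≠ 1`).  Let `b, e ∈ K` be
nonzero, let `h = !![0, b; 1, 0]`, and suppose there are `g ∈ GL₂(L)` with
`g·σ(g) = e·I`, `M ∈ GL₂(L)` and a nonzero `c ∈ L` with `h = c • (M·g·σ(M)⁻¹)`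
(σ acting entrywise).  Then `b/e = c·σ(c)`, i.e. `b/e` is the norm of `c`. -/
theorem norm_identity_of_cocycle_equivalence
    (K L : Type*) [Field K] [Field L] [Algebra K L] (h2 : (2 : K) ≠ 0)
    [IsGalois K L] (hrank : Module.finrank K L = 2)
    (σ : L ≃ₐ[K] L) (hσ : σ ≠ 1)
    (b e : K) (hb : b ≠ 0) (he : e ≠ 0)
    (g M : GL (Fin 2) L) (c : L) (hc : c ≠ 0)
    (hg : (g : Matrix (Fin 2) (Fin 2) L) * (g : Matrix (Fin 2) (Fin 2) L).map σ
        = algebraMap K L e • (1 : Matrix (Fin 2) (Fin 2) L))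
    (hh : !![0, algebraMap K L b; 1, 0]
        = c • ((M : Matrix (Fin 2) (Fin 2) L) * (g : Matrix (Fin 2) (Fin 2) L) *
            ((M⁻¹ : GL (Fin 2) L) : Matrix (Fin 2) (Fin 2) L).map σ)) :
    algebraMap K L (b / e) = c * σ c := by
  classical
  -- σ is an involution
  have : FiniteDimensional K L := Module.finite_of_finrank_pos (by rw [hrank]; norm_num)
  have hcard : Fintype.card (L ≃ₐ[K] L) = 2 := by
    rw [← Nat.card_eq_fintype_card, IsGalois.card_aut_eq_finrank, hrank]
  have hσ2 : σ * σ = 1 := by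
    have h' : σ ^ Fintype.card (L ≃ₐ[K] L) = 1 := pow_card_eq_one
    rwa [hcard, pow_two] at h'
  have hσσ : ∀ x : L, σ (σ x) = x := by
    intro x
    have := congrArg (fun f : L ≃ₐ[K] L => f x) hσ2
    simpa using this
  set N : Matrix (Fin 2) (Fin 2) L := (M : Matrix (Fin 2) (Fin 2) L) with hN
  set Ni : Matrix (Fin 2) (Fin 2) L := ((M⁻¹ : GL (Fin 2) L) : Matrix (Fin 2) (Fin 2) L)
  set G : Matrix (Fin 2) (Fin 2) L := (g : Matrix (Fin 2) (Fin 2) L)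
  have hNNi : N * Ni = 1 := by
    exact M.mul_inv
  have hNiN : Ni * N = 1 := by
    exact M.inv_mul
  -- apply σ to hh
  set bb : L := algebraMap K L b with hbb
  have hmap : !![0, bb; 1, 0]
      = σ c • (N.map σ * G.map σ * Ni) := by
    have hsmulmap : ∀ (x : L) (A : Matrix (Fin 2) (Fin 2) L),
        (x • A).map ⇑σ = σ x • A.map ⇑σ := by
      intro x A; ext i j; simp [Matrix.map_apply, _root_.map_mul]
    have := congrArg (fun A : Matrix (Fin 2) (Fin 2) L => A.map ⇑σ) hh
    rw [hsmulmap, map_mul_aux, map_mul_aux] at this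
    have hfix : (!![0, bb; 1, 0] : Matrix (Fin 2) (Fin 2) L).map σ = !![0, bb; 1, 0] := by
      ext i j
      fin_cases i <;> fin_cases j <;> simp [bb, Matrix.map_apply]
    have hdouble : (Ni.map σ).map σ = Ni := by
      ext i j; simp [Matrix.map_apply, hσσ]
    rw [hfix, hdouble] at this
    exact this
  -- multiply the two equations
  have hσc : σ c ≠ 0 := fun h0 => hc (by rw [← hσσ c, h0, map_zero])
  have key : (!![0, bb; 1, 0] : Matrix (Fin 2) (Fin 2) L) * !![0, bb; 1, 0]
      = (c * σ c * algebraMap K L e) • (1 : Matrix (Fin 2) (Fin 2) L) := by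
    rw [show (!![0, bb; 1, 0] * !![0, bb; 1, 0] : Matrix (Fin 2) (Fin 2) L)
        = (c • (N * G * Ni.map ⇑σ)) * (σ c • (N.map ⇑σ * G.map ⇑σ * Ni)) from by
      rw [← hh, ← hmap]]
    rw [smul_mul_assoc, mul_smul_comm, smul_smul]
    have hNiNσ : Ni.map ⇑σ * N.map ⇑σ = 1 := by
      rw [← map_mul_aux, hNiN]
      ext i j; fin_cases i <;> fin_cases j <;> simp [Matrix.map_apply]
    have hmid : N * G * Ni.map ⇑σ * (N.map ⇑σ * G.map ⇑σ * Ni)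
        = algebraMap K L e • (1 : Matrix (Fin 2) (Fin 2) L) := by
      calc N * G * Ni.map ⇑σ * (N.map ⇑σ * G.map ⇑σ * Ni)
          = N * (G * ((Ni.map ⇑σ * N.map ⇑σ) * G.map ⇑σ)) * Ni := by noncomm_ring
        _ = N * (G * G.map ⇑σ) * Ni := by rw [hNiNσ, one_mul]
        _ = _ := by rw [hg, mul_smul_comm, smul_mul_assoc, mul_one, hNNi]
    rw [hmid, smul_smul]
  -- compute the square of h
  have hsq : (!![0, bb; 1, 0] : Matrix (Fin 2) (Fin 2) L) * !![0, bb; 1, 0]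
      = bb • (1 : Matrix (Fin 2) (Fin 2) L) := by
    ext i j; fin_cases i <;> fin_cases j <;> simp [Matrix.mul_apply, Fin.sum_univ_two, Matrix.one_apply]
  rw [hsq] at key
  have hentry := congrArg (fun A : Matrix (Fin 2) (Fin 2) L => A 0 0) key
  simp [Matrix.one_apply] at hentry
  have hee : algebraMap K L e ≠ 0 := by
    simpa using (map_ne_zero (algebraMap K L)).mpr he
  rw [map_div₀, ← hbb, hentry]
  field_simp
end

section
/- Let A be a discrete valuation ring containing a field of characteristic ≠ 2, complete with respect to its maximal ideal, with fraction field K and residue field k. Let a be a unit of A whose image in k is not a square in k, let b be a uniformizer of A, let B = A[X]/(X² − a), let L be the fraction field of B (so L = K[X]/(X² − a)), and let σ be the nontrivial K-automorphism of L (which preserves B). Let h be the 2×2 matrix over L with rows (0, b) and (1, 0). Then there do NOT exist g ∈ GL₂(B), a unit e of A, M ∈ GL₂(L), and a nonzero c ∈ L such that g·σ(g) = e·I and h = c · (M · g · σ(M)⁻¹). -/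
open Polynomial Matrix

set_option maxHeartbeats 1000000


section Arith
variable {A : Type*} [CommRing A] [IsDomain A] [IsDiscreteValuationRing A]
  {a b : A}

lemma aux_norm_unit (ha : IsUnit a)
    (ha' : ¬ ∃ e : IsLocalRing.ResidueField A, IsLocalRing.residue A a = e ^ 2)
    (w z : Aˣ) : IsUnit ((w : A)^2 - a * (z : A)^2) := by
  by_contra h
  have hm : (w : A)^2 - a * (z : A)^2 ∈ IsLocalRing.maximalIdeal A := h
  apply ha'
  have h0 : IsLocalRing.residue A ((w : A)^2 - a * (z : A)^2) = 0 :=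
    Ideal.Quotient.eq_zero_iff_mem.mpr hm
  rw [map_sub, _root_.map_mul, map_pow, map_pow, sub_eq_zero] at h0
  have hz : IsLocalRing.residue A (z : A) ≠ 0 := by
    have : IsUnit (IsLocalRing.residue A (z : A)) := (z.isUnit).map _
    exact this.ne_zero
  refine ⟨IsLocalRing.residue A (w : A) / IsLocalRing.residue A (z : A), ?_⟩
  field_simp
  linear_combination -h0

lemma aux_unit_sub_mem (x : A) (hx : IsUnit x) (y : A)
    (hy : y ∈ IsLocalRing.maximalIdeal A) : IsUnit (x - y) := by
  by_contra h
  have : x - y ∈ IsLocalRing.maximalIdeal A := h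
  have : x ∈ IsLocalRing.maximalIdeal A := by
    have := Ideal.add_mem _ this hy
    simpa using this
  exact this hx

lemma aux_even (ha : IsUnit a)
    (ha' : ¬ ∃ e : IsLocalRing.ResidueField A, IsLocalRing.residue A a = e ^ 2)
    (hb : Irreducible b) (u v : A) (h : u ≠ 0 ∨ v ≠ 0) :
    ∃ (m : ℕ) (w : Aˣ), u^2 - a * v^2 = (w : A) * b^(2*m) := by
  have hbm : b ∈ IsLocalRing.maximalIdeal A := hb.not_isUnit
  rcases eq_or_ne v 0 with rfl | hv
  · rcases h with hu | hu
    · obtain ⟨n, w, rfl⟩ := IsDiscreteValuationRing.eq_unit_mul_pow_irreducible hu hb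
      exact ⟨n, w^2, by push_cast; ring⟩
    · exact absurd rfl hu
  rcases eq_or_ne u 0 with rfl | hu
  · obtain ⟨n, z, rfl⟩ := IsDiscreteValuationRing.eq_unit_mul_pow_irreducible hv hb
    refine ⟨n, (ha.neg.mul (z^2).isUnit).unit, ?_⟩
    rw [IsUnit.unit_spec]; push_cast; ring
  obtain ⟨m, w, rfl⟩ := IsDiscreteValuationRing.eq_unit_mul_pow_irreducible hu hb
  obtain ⟨n, z, rfl⟩ := IsDiscreteValuationRing.eq_unit_mul_pow_irreducible hv hb
  rcases lt_trichotomy m n with hmn | rfl | hmn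
  · have hin : IsUnit ((w : A)^2 - a * (z : A)^2 * b^(2*(n-m))) := by
      refine aux_unit_sub_mem _ ((w.isUnit).pow 2) _ ?_
      have h1 : (2*(n-m)) ≠ 0 := by omega
      exact Ideal.mul_mem_left _ _ (by
        rcases Nat.exists_eq_succ_of_ne_zero h1 with ⟨k, hk⟩
        rw [hk, pow_succ]
        exact Ideal.mul_mem_left _ _ hbm)
    refine ⟨m, hin.unit, ?_⟩
    have hp : (b^n)^2 = (b^m)^2 * b^(2*(n-m)) := by
      rw [← pow_mul, ← pow_mul, ← pow_add]; congr 1; omega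
    rw [IsUnit.unit_spec, mul_pow, mul_pow, hp]; ring
  · refine ⟨m, (aux_norm_unit ha ha' w z).unit, ?_⟩
    rw [IsUnit.unit_spec]; ring
  · have hin : IsUnit (a * (z : A)^2 - (w : A)^2 * b^(2*(m-n))) := by
      refine aux_unit_sub_mem _ (ha.mul ((z.isUnit).pow 2)) _ ?_
      have h1 : (2*(m-n)) ≠ 0 := by omega
      exact Ideal.mul_mem_left _ _ (by
        rcases Nat.exists_eq_succ_of_ne_zero h1 with ⟨k, hk⟩
        rw [hk, pow_succ]
        exact Ideal.mul_mem_left _ _ hbm)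
    refine ⟨n, (hin.neg).unit, ?_⟩
    have hp : (b^m)^2 = (b^n)^2 * b^(2*(m-n)) := by
      rw [← pow_mul, ← pow_mul, ← pow_add]; congr 1; omega
    rw [IsUnit.unit_spec, mul_pow, mul_pow, hp]; ring

lemma aux_final (ha : IsUnit a)
    (ha' : ¬ ∃ e : IsLocalRing.ResidueField A, IsLocalRing.residue A a = e ^ 2)
    (hb : Irreducible b) (s t u v : A) (hst : s ≠ 0 ∨ t ≠ 0) (e : Aˣ)
    (h : b * (s^2 - a * t^2) = (e : A) * (u^2 - a * v^2)) : False := by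
  obtain ⟨m, w, h1⟩ := aux_even ha ha' hb s t hst
  have huv : u ≠ 0 ∨ v ≠ 0 := by
    by_contra hc
    push_neg at hc
    obtain ⟨rfl, rfl⟩ := hc
    rw [h1] at h
    simp only [ne_eq, OfNat.ofNat_ne_zero, not_false_eq_true, zero_pow, mul_zero, sub_zero,
      mul_zero] at h
    have : (b : A) * ((w : A) * b^(2*m)) ≠ 0 := by
      apply mul_ne_zero hb.ne_zero
      exact mul_ne_zero w.isUnit.ne_zero (pow_ne_zero _ hb.ne_zero)
    exact this h
  obtain ⟨k, z, h2⟩ := aux_even ha ha' hb u v huv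
  rw [h1, h2] at h
  have h' : (w : A) * b^(2*m+1) = ((e*z : Aˣ) : A) * b^(2*k) := by
    push_cast; rw [pow_succ]; linear_combination h
  have := IsDiscreteValuationRing.unit_mul_pow_congr_pow hb hb w (e*z) (2*m+1) (2*k) h'
  omega

end Arith
open Matrix
set_option maxHeartbeats 1000000

lemma adjoinRoot_repr {A : Type*} [CommRing A] [Nontrivial A] (a : A)
    (x : AdjoinRoot (X^2 - C a)) :
    ∃ u v : A, x = algebraMap A _ u + algebraMap A _ v * AdjoinRoot.root (X^2 - C a) := by
  obtain ⟨P, rfl⟩ := AdjoinRoot.mk_surjective x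
  have hmonic : (X^2 - C a).Monic := monic_X_pow_sub_C a two_ne_zero
  refine ⟨(P %ₘ (X^2 - C a)).coeff 0, (P %ₘ (X^2 - C a)).coeff 1, ?_⟩
  have hdeg : (P %ₘ (X^2 - C a)).degree ≤ 1 := by
    have h2 : (X^2 - C a).degree = 2 := degree_X_pow_sub_C (by norm_num) a
    have := degree_modByMonic_lt P hmonic
    rw [h2] at this
    exact Order.le_of_lt_succ (by exact_mod_cast this)
  have hPmod : AdjoinRoot.mk (X^2 - C a) P = AdjoinRoot.mk (X^2 - C a) (P %ₘ (X^2 - C a)) := by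
    rw [AdjoinRoot.mk_eq_mk]
    exact ⟨P /ₘ (X^2 - C a), by linear_combination (modByMonic_add_div P (X^2 - C a)).symm⟩
  rw [hPmod]
  conv_lhs => rw [eq_X_add_C_of_degree_le_one hdeg]
  rw [map_add, _root_.map_mul, AdjoinRoot.mk_X, AdjoinRoot.mk_C, AdjoinRoot.mk_C,
    AdjoinRoot.algebraMap_eq]
  ring

lemma adjoinRoot_root_sq {A : Type*} [CommRing A] (a : A) :
    (AdjoinRoot.root (X^2 - C a))^2 = algebraMap A _ a := by
  have := AdjoinRoot.mk_self (f := X^2 - C a)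
  rw [map_sub, map_pow, AdjoinRoot.mk_X, AdjoinRoot.mk_C, sub_eq_zero] at this
  rw [this, AdjoinRoot.algebraMap_eq]


/-- Let `A` be a complete discrete valuation ring containing a field of
characteristic ≠ 2, with fraction field `K` and residue field `k`.  Let `a` be a unit of
`A` whose residue is not a square in `k`, let `b` be a uniformizer of `A`, let
`B = A[X]/(X² - a)`, let `L` be the fraction field of `B` (so `L = K[X]/(X² - a)`), and
let `σ` be the nontrivial `K`-automorphism of `L`.  Let `h = !![0, b; 1, 0]` over `L`.
Then there do NOT exist `g ∈ GL₂(B)`, a unit `e` of `A`, `M ∈ GL₂(L)` and a nonzero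
`c ∈ L` such that `g·σ(g) = e·I` and `h = c • (M·g·σ(M)⁻¹)` (with `σ` acting
entrywise on matrices). -/
theorem no_cocycle_equivalence_over_dvr
    (F A K : Type*) [Field F] [CommRing A] [IsDomain A] [IsDiscreteValuationRing A]
    [Algebra F A] (hF : (2 : F) ≠ 0)
    [IsAdicComplete (IsLocalRing.maximalIdeal A) A]
    [Field K] [Algebra A K] [IsFractionRing A K]
    (a : A) (ha : IsUnit a)
    (ha' : ¬ ∃ e : IsLocalRing.ResidueField A, IsLocalRing.residue A a = e ^ 2)
    (b : A) (hb : Irreducible b)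
    (L : Type*) [Field L] [Algebra (AdjoinRoot (X ^ 2 - C a)) L]
    [IsFractionRing (AdjoinRoot (X ^ 2 - C a)) L]
    [Algebra K L] [Algebra A L]
    [IsScalarTower A (AdjoinRoot (X ^ 2 - C a)) L] [IsScalarTower A K L]
    (σ : L ≃ₐ[K] L) (hσ : σ ≠ 1) :
    ¬ ∃ (g : GL (Fin 2) (AdjoinRoot (X ^ 2 - C a))) (e : Aˣ) (M : GL (Fin 2) L) (c : L),
        c ≠ 0 ∧
        ((g : Matrix (Fin 2) (Fin 2) (AdjoinRoot (X ^ 2 - C a))).map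
              (algebraMap (AdjoinRoot (X ^ 2 - C a)) L) *
            ((g : Matrix (Fin 2) (Fin 2) (AdjoinRoot (X ^ 2 - C a))).map
              (algebraMap (AdjoinRoot (X ^ 2 - C a)) L)).map σ
          = algebraMap A L ↑e • (1 : Matrix (Fin 2) (Fin 2) L)) ∧
        !![0, algebraMap A L b; 1, 0]
          = c • ((M : Matrix (Fin 2) (Fin 2) L) *
              (g : Matrix (Fin 2) (Fin 2) (AdjoinRoot (X ^ 2 - C a))).map
                (algebraMap (AdjoinRoot (X ^ 2 - C a)) L) *
              ((M⁻¹ : GL (Fin 2) L) : Matrix (Fin 2) (Fin 2) L).map σ) := by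
  set B := AdjoinRoot (X ^ 2 - C a) with hB
  let φ : B →+* L := algebraMap B L
  let ρ : L := φ (AdjoinRoot.root (X ^ 2 - C a))
  let aL : A →+* L := algebraMap A L
  -- basic facts
  have hφA : ∀ x : A, φ (algebraMap A B x) = aL x := fun x =>
    (IsScalarTower.algebraMap_apply A B L x).symm
  have hfixA : ∀ x : A, σ (aL x) = aL x := by
    intro x
    rw [IsScalarTower.algebraMap_apply A K L]
    exact σ.commutes _
  have hρ2 : ρ^2 = aL a := by
    show (φ _)^2 = _
    rw [← map_pow, adjoinRoot_root_sq, hφA]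
  have hreprL : ∀ x : B, ∃ u v : A, φ x = aL u + aL v * ρ := by
    intro x
    obtain ⟨u, v, rfl⟩ := adjoinRoot_repr a x
    exact ⟨u, v, by rw [map_add, _root_.map_mul, hφA, hφA]⟩
  -- any K-algebra automorphism fixing ρ is the identity
  have hgen : ∀ (τ : L ≃ₐ[K] L), τ ρ = ρ → τ = 1 := by
    intro τ hτ
    have hfixAτ : ∀ x : A, τ (aL x) = aL x := by
      intro x
      rw [IsScalarTower.algebraMap_apply A K L]
      exact τ.commutes _
    have hfixB : ∀ y : B, τ (φ y) = φ y := by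
      intro y
      obtain ⟨u, v, hy⟩ := hreprL y
      rw [hy, map_add, _root_.map_mul, hfixAτ, hfixAτ, hτ]
    ext x
    obtain ⟨p, q, -, hpq⟩ := IsFractionRing.div_surjective (A := B) x
    rw [← hpq, map_div₀, hfixB, hfixB]
    rfl
  -- σ ρ = -ρ
  have hσρ : σ ρ = -ρ := by
    have h2 : (σ ρ - ρ) * (σ ρ + ρ) = 0 := by
      have : (σ ρ)^2 = ρ^2 := by rw [← map_pow, hρ2, hfixA]
      ring_nf
      linear_combination this
    rcases mul_eq_zero.mp h2 with h | h
    · exact absurd (hgen σ (sub_eq_zero.mp h)) hσ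
    · exact eq_neg_of_add_eq_zero_left h
  have hσσ : ∀ x : L, σ (σ x) = x := by
    have h1 : σ.trans σ = 1 := hgen (σ.trans σ) (by
      rw [AlgEquiv.trans_apply, hσρ, map_neg, hσρ, neg_neg])
    intro x
    have h2 := congrArg (fun e : L ≃ₐ[K] L => e x) h1
    simpa using h2
  -- matrix helper lemmas for the entrywise action of σ
  have hmul : ∀ P Q : Matrix (Fin 2) (Fin 2) L, (P * Q).map ⇑σ = P.map ⇑σ * Q.map ⇑σ := by
    intro P Q
    ext i j
    simp [Matrix.map_apply, Matrix.mul_apply, _root_.map_mul]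
  have hone : (1 : Matrix (Fin 2) (Fin 2) L).map ⇑σ = 1 := by
    ext i j
    simp [Matrix.map_apply, Matrix.one_apply, apply_ite (⇑σ)]
  have hmapσσ : ∀ N : Matrix (Fin 2) (Fin 2) L, (N.map ⇑σ).map ⇑σ = N := by
    intro N
    ext i j
    simp [Matrix.map_apply, hσσ]
  have hmapsmul : ∀ (x : L) (N : Matrix (Fin 2) (Fin 2) L),
      (x • N).map ⇑σ = σ x • N.map ⇑σ := by
    intro x N
    ext i j
    simp [Matrix.map_apply, Matrix.smul_apply, smul_eq_mul, _root_.map_mul]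
  rintro ⟨g, e, M, c, hc, hcoc, heq⟩
  set G : Matrix (Fin 2) (Fin 2) L :=
    (g : Matrix (Fin 2) (Fin 2) B).map (algebraMap B L) with hG
  set Mm : Matrix (Fin 2) (Fin 2) L := (M : Matrix (Fin 2) (Fin 2) L) with hMm
  set Mi : Matrix (Fin 2) (Fin 2) L := ((M⁻¹ : GL (Fin 2) L) : Matrix (Fin 2) (Fin 2) L) with hMi
  have hMinv : Mi * Mm = 1 := M.inv_mul
  have hMinv' : Mm * Mi = 1 := M.mul_inv
  have hMM : Mi.map ⇑σ * Mm.map ⇑σ = 1 := by rw [← hmul, hMinv, hone]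
  have hH : (!![0, aL b; 1, 0] : Matrix (Fin 2) (Fin 2) L).map ⇑σ = !![0, aL b; 1, 0] := by
    ext i j
    fin_cases i <;> fin_cases j <;>
      simp [Matrix.map_apply, hfixA b]
  have hHH : (!![0, aL b; 1, 0] : Matrix (Fin 2) (Fin 2) L)
        * (!![0, aL b; 1, 0] : Matrix (Fin 2) (Fin 2) L).map ⇑σ
      = (c * σ c * aL ↑e) • 1 := by
    rw [heq, hmapsmul, smul_mul_assoc, mul_smul_comm, smul_smul]
    rw [hmul, hmul, hmapσσ]
    calc (c * σ c) • (Mm * G * Mi.map ⇑σ * (Mm.map ⇑σ * G.map ⇑σ * Mi))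
        = (c * σ c) • (Mm * (G * ((Mi.map ⇑σ * Mm.map ⇑σ) * (G.map ⇑σ * Mi)))) := by
          rw [show Mm * G * Mi.map ⇑σ * (Mm.map ⇑σ * G.map ⇑σ * Mi)
              = Mm * (G * ((Mi.map ⇑σ * Mm.map ⇑σ) * (G.map ⇑σ * Mi))) by
            simp only [mul_assoc]]
      _ = (c * σ c) • (Mm * (G * G.map ⇑σ) * Mi) := by
          rw [hMM, one_mul]
          congr 1
          simp only [mul_assoc]
      _ = (c * σ c * aL ↑e) • 1 := by
          rw [hcoc, mul_smul_comm, smul_mul_assoc, mul_one, hMinv', smul_smul]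
  have hHH2 : (!![0, aL b; 1, 0] : Matrix (Fin 2) (Fin 2) L)
        * (!![0, aL b; 1, 0] : Matrix (Fin 2) (Fin 2) L)
      = (c * σ c * aL ↑e) • 1 := by
    rw [← hHH, hH]
  have hkey : aL b = c * σ c * aL ↑e := by
    have h00 := congrFun (congrFun hHH2 0) 0
    simpa [Matrix.mul_apply, Fin.sum_univ_two, Matrix.smul_apply, Matrix.one_apply,
      smul_eq_mul] using h00
  obtain ⟨p, q, hqmem, hpq⟩ := IsFractionRing.div_surjective (A := B) c
  have hq0 : φ q ≠ 0 := by
    intro h0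
    apply hc
    rw [← hpq]
    show φ p / φ q = 0
    rw [h0, div_zero]
  obtain ⟨u, v, hp⟩ := hreprL p
  obtain ⟨s, t, hqr⟩ := hreprL q
  have hst : s ≠ 0 ∨ t ≠ 0 := by
    by_contra h0
    push_neg at h0
    apply hq0
    rw [hqr, h0.1, h0.2]
    simp
  have hNp : φ p * σ (φ p) = aL (u^2 - a*v^2) := by
    rw [hp, map_add, _root_.map_mul, hfixA, hfixA, hσρ]
    rw [show (aL u + aL v * ρ) * (aL u + aL v * -ρ) = (aL u)^2 - (aL v)^2 * ρ^2 by ring]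
    rw [hρ2, map_sub, _root_.map_mul, map_pow, map_pow]; ring
  have hNq : φ q * σ (φ q) = aL (s^2 - a*t^2) := by
    rw [hqr, map_add, _root_.map_mul, hfixA, hfixA, hσρ]
    rw [show (aL s + aL t * ρ) * (aL s + aL t * -ρ) = (aL s)^2 - (aL t)^2 * ρ^2 by ring]
    rw [hρ2, map_sub, _root_.map_mul, map_pow, map_pow]; ring
  have hσq0 : σ (φ q) ≠ 0 := by
    intro h0
    exact hq0 (σ.injective (by rw [h0, map_zero]))
  have hNq0 : φ q * σ (φ q) ≠ 0 := mul_ne_zero hq0 hσq0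
  have hmain : aL b * (φ q * σ (φ q)) = aL ↑e * (φ p * σ (φ p)) := by
    have h1 : c * σ c = (φ p * σ (φ p)) / (φ q * σ (φ q)) := by
      rw [← hpq, map_div₀]
      show (φ p / φ q) * (σ (φ p) / σ (φ q)) = _
      field_simp
    rw [hkey, h1]
    field_simp
  rw [hNp, hNq] at hmain
  have hinj : Function.Injective ⇑aL := by
    have h2 : aL = (algebraMap K L).comp (algebraMap A K) := IsScalarTower.algebraMap_eq A K L
    rw [h2]
    exact (algebraMap K L).injective.comp (IsFractionRing.injective A K)
  have hA : b * (s^2 - a*t^2) = ↑e * (u^2 - a*v^2) := by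
    apply hinj
    rw [_root_.map_mul, _root_.map_mul]
    exact hmain
  exact aux_final ha ha' hb s t u v hst e hA
end
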